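/- arXiv:2304.09664 — 7 statements merged into one kernel-verified Lean document; each statement's English description precedes it below -/
import Mathlib

section
/- If μ is a partitioned order of [n] consisting of s o-blocks all of the same size p, then φ(μ) is an ordered partition of [n] consisting of p blocks, each of size s. -/
/-!
When every o-block has length `p`, the period is `p` and `ℓ % |S| = ℓ` for `ℓ < p`, so `W_ℓ` is
the set of `ℓ`-th entries of the o-blocks. Since the o-blocks are disjoint, `S ↦ S[ℓ]` is
injective, so `|W_ℓ| = s`; since each o-block has distinct entries, `W_i` and `W_j` are disjoint
for `i ≠ j`; and each `x = S[i]` lies in `W_i`.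
-/

/-- A partitioned order of `[n]`: a set of pairwise disjoint nonempty lists
of distinct elements of `[n]` whose union is `[n]`. -/
structure PartitionedOrder (n : ℕ) where
  oblocks : Finset (List (Fin n))
  nonempty : ∀ S ∈ oblocks, S ≠ []
  nodup : ∀ S ∈ oblocks, S.Nodup
  disjoint : ∀ S ∈ oblocks, ∀ T ∈ oblocks, S ≠ T → ∀ x, x ∈ S → x ∉ T
  cover : ∀ x : Fin n, ∃ S ∈ oblocks, x ∈ S

namespace PartitionedOrder

variable {n : ℕ}

/-- The block `W_ℓ = { S_k[ℓ mod n_k] : k }` of the sequential rewriting. -/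
def phiBlock (μ : PartitionedOrder n) (ℓ : ℕ) : Finset (Fin n) :=
  μ.oblocks.attach.image (fun S =>
    S.1.get ⟨ℓ % S.1.length,
      Nat.mod_lt _ (List.length_pos_iff.mpr (μ.nonempty S.1 S.2))⟩)

/-- The period `p` of a partitioned order: the lcm of its o-block lengths. -/
def period (μ : PartitionedOrder n) : ℕ := μ.oblocks.lcm List.length

/-- The sequential rewriting `φ(μ) = (W_0, …, W_{p-1})`. -/
def phi (μ : PartitionedOrder n) : List (Finset (Fin n)) :=
  (List.range μ.period).map μ.phiBlock

end PartitionedOrder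

/-- An ordered partition of `[n]` (block-sequential update mode): a sequence of
nonempty pairwise disjoint subsets of `[n]` whose union is `[n]`. -/
def IsOrderedPartition {n : ℕ} (L : List (Finset (Fin n))) : Prop :=
  (∀ W ∈ L, W.Nonempty) ∧ L.Pairwise Disjoint ∧ ∀ x : Fin n, ∃ W ∈ L, x ∈ W

namespace PartitionedOrder

variable {n : ℕ} (μ : PartitionedOrder n)

theorem eq_of_mem_of_mem {S T : List (Fin n)} (hS : S ∈ μ.oblocks) (hT : T ∈ μ.oblocks)
    {x : Fin n} (hxS : x ∈ S) (hxT : x ∈ T) : S = T :=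
  by_contra fun h => μ.disjoint S hS T hT h x hxS hxT

theorem mem_phiBlock {ℓ : ℕ} {x : Fin n} :
    x ∈ μ.phiBlock ℓ ↔ ∃ S ∈ μ.oblocks, S[ℓ % S.length]? = some x := by
  simp only [phiBlock, Finset.mem_image, Finset.mem_attach, true_and, Subtype.exists,
    List.getElem?_eq_some_iff, List.get_eq_getElem]
  constructor
  · rintro ⟨S, hS, h⟩
    exact ⟨S, hS, _, h⟩
  · rintro ⟨S, hS, _, h⟩
    exact ⟨S, hS, h⟩

theorem card_phiBlock (ℓ : ℕ) : (μ.phiBlock ℓ).card = μ.oblocks.card := by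
  rw [phiBlock, Finset.card_image_of_injective _ ?_, Finset.card_attach]
  intro S T h
  simp only at h
  exact Subtype.ext (μ.eq_of_mem_of_mem S.2 T.2 (List.get_mem _ _) (h ▸ List.get_mem T.1 _))

theorem phiBlock_nonempty (h : μ.oblocks.Nonempty) (ℓ : ℕ) : (μ.phiBlock ℓ).Nonempty := by
  rw [← Finset.card_pos, card_phiBlock]
  exact h.card_pos

theorem disjoint_phiBlock {i j : ℕ} (h : ∀ S ∈ μ.oblocks, i % S.length ≠ j % S.length) :
    Disjoint (μ.phiBlock i) (μ.phiBlock j) := by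
  refine Finset.disjoint_left.2 fun x hi hj => ?_
  obtain ⟨S, hS, hSx⟩ := μ.mem_phiBlock.1 hi
  obtain ⟨T, hT, hTx⟩ := μ.mem_phiBlock.1 hj
  obtain rfl := μ.eq_of_mem_of_mem hS hT (List.mem_of_getElem? hSx) (List.mem_of_getElem? hTx)
  exact h S hS ((List.getElem?_inj (Nat.mod_lt _ (List.length_pos_iff.2 (μ.nonempty S hS)))
    (μ.nodup S hS)).1 (hSx.trans hTx.symm))

theorem period_pos : 0 < μ.period := by
  refine Nat.pos_of_ne_zero fun h => ?_
  obtain ⟨S, hS, hS0⟩ := Finset.lcm_eq_zero_iff.1 h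
  exact μ.nonempty S hS (List.length_eq_zero_iff.1 hS0)

theorem length_le_period {S : List (Fin n)} (hS : S ∈ μ.oblocks) : S.length ≤ μ.period :=
  Nat.le_of_dvd μ.period_pos (Finset.dvd_lcm hS)

theorem period_eq_of_forall_length_eq {p : ℕ} (hne : μ.oblocks.Nonempty)
    (hlen : ∀ S ∈ μ.oblocks, S.length = p) : μ.period = p := by
  obtain ⟨S, hS⟩ := hne
  exact Nat.dvd_antisymm (Finset.lcm_dvd fun T hT => (hlen T hT).dvd)
    (hlen S hS ▸ Finset.dvd_lcm hS)

theorem length_phi : μ.phi.length = μ.period := by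
  simp [phi]

theorem mem_phi {W : Finset (Fin n)} : W ∈ μ.phi ↔ ∃ ℓ < μ.period, μ.phiBlock ℓ = W := by
  simp [phi]

theorem exists_mem_phi (x : Fin n) : ∃ W ∈ μ.phi, x ∈ W := by
  obtain ⟨S, hS, hxS⟩ := μ.cover x
  obtain ⟨i, hi⟩ := List.mem_iff_getElem?.1 hxS
  have hiS : i < S.length := (List.getElem?_eq_some_iff.1 hi).1
  refine ⟨μ.phiBlock i, μ.mem_phi.2 ⟨i, hiS.trans_le (μ.length_le_period hS), rfl⟩, ?_⟩
  exact μ.mem_phiBlock.2 ⟨S, hS, by rwa [Nat.mod_eq_of_lt hiS]⟩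

theorem pairwise_disjoint_phi (hlen : ∀ S ∈ μ.oblocks, S.length = μ.period) :
    μ.phi.Pairwise Disjoint := by
  rw [phi, List.pairwise_map]
  refine List.nodup_range.pairwise_of_forall_ne fun i hi j hj hij => ?_
  refine μ.disjoint_phiBlock fun S hS => ?_
  rw [hlen S hS, Nat.mod_eq_of_lt (List.mem_range.1 hi), Nat.mod_eq_of_lt (List.mem_range.1 hj)]
  exact hij

theorem isOrderedPartition_phi (hne : μ.oblocks.Nonempty)
    (hlen : ∀ S ∈ μ.oblocks, S.length = μ.period) : IsOrderedPartition μ.phi := by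
  refine ⟨fun W hW => ?_, μ.pairwise_disjoint_phi hlen, μ.exists_mem_phi⟩
  obtain ⟨ℓ, -, rfl⟩ := μ.mem_phi.1 hW
  exact μ.phiBlock_nonempty hne ℓ

end PartitionedOrder

/-- if a partitioned order has `s` o-blocks, all of size `p`, then
its rewriting is an ordered partition made of `p` blocks, each of size `s`. -/
theorem phi_of_uniform_partitioned_order {n s p : ℕ} (μ : PartitionedOrder n)
    (hne : μ.oblocks.Nonempty) (hcard : μ.oblocks.card = s)
    (hlen : ∀ S ∈ μ.oblocks, S.length = p) :
    IsOrderedPartition μ.phi ∧ μ.phi.length = p ∧ ∀ W ∈ μ.phi, W.card = s := by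
  have hper : μ.period = p := μ.period_eq_of_forall_length_eq hne hlen
  refine ⟨μ.isOrderedPartition_phi hne (hper ▸ hlen), hper ▸ μ.length_phi, fun W hW => ?_⟩
  obtain ⟨ℓ, -, rfl⟩ := μ.mem_phi.1 hW
  exact hcard ▸ μ.card_phiBlock ℓ
end

section
/- For all natural numbers x, y and j ≥ 1, the product over ℓ from 1 to j of C(x − (ℓ−1)·y, y) equals C(x, j·y) times the product over ℓ from 1 to j of C((j−ℓ+1)·y, y). -/
/-!
Choosing `j` successive disjoint `y`-subsets of an `x`-set is the same as first choosing their
union, a `j y`-subset, and then splitting it into `j` ordered `y`-blocks. Algebraically, each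
step is `C(x, a) C(x - a, y) = C(x, a + y) C(a + y, y)`, so the product telescopes.
-/

open Finset

-- For `a > n` both sides vanish, `n - a` being truncated to `0`.
theorem Nat.choose_mul_choose_sub (n a b : ℕ) :
    n.choose a * (n - a).choose b = n.choose (a + b) * (a + b).choose b := by
  rw [← Nat.choose_symm_add, Nat.choose_mul (Nat.le_add_right a b), Nat.add_sub_cancel_left]

theorem Nat.prod_range_choose_sub_mul (n y j : ℕ) :
    ∏ i ∈ range j, (n - i * y).choose y =
      n.choose (j * y) * ∏ i ∈ range j, ((i + 1) * y).choose y := by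
  induction j with
  | zero => simp
  | succ j ih =>
    rw [prod_range_succ, prod_range_succ, ih, mul_assoc, mul_comm (∏ i ∈ range j, _), ← mul_assoc,
      Nat.choose_mul_choose_sub, ← Nat.succ_mul]
    ring

theorem Finset.prod_Icc_one_eq_prod_range {M : Type*} [CommMonoid M] (f : ℕ → M) (n : ℕ) :
    ∏ k ∈ Icc 1 n, f k = ∏ k ∈ range n, f (k + 1) := by
  rw [← Ico_add_one_right_eq_Icc, prod_Ico_eq_prod_range, Nat.add_sub_cancel]
  simp_rw [add_comm 1]

open Finset in
theorem prod_choose_telescope_general (x y j : ℕ) :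
    ∏ ℓ ∈ Icc 1 j, Nat.choose (x - (ℓ - 1) * y) y =
    Nat.choose x (j * y) * ∏ ℓ ∈ Icc 1 j, Nat.choose ((j - ℓ + 1) * y) y := by
  have reflect : ∏ i ∈ range j, ((j - (i + 1) + 1) * y).choose y =
      ∏ i ∈ range j, ((i + 1) * y).choose y := by
    rw [← prod_range_reflect (fun i ↦ ((i + 1) * y).choose y)]
    refine prod_congr rfl fun i hi ↦ ?_
    have : i < j := mem_range.mp hi
    congr 3
    omega
  simp only [prod_Icc_one_eq_prod_range, Nat.add_sub_cancel, reflect]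
  exact Nat.prod_range_choose_sub_mul x y j

open Finset in
/-- `∏_{ℓ=1}^{j} C(x-(ℓ-1)y, y) = C(x, jy) · ∏_{ℓ=1}^{j} C((j-ℓ+1)y, y)`. -/
theorem prod_choose_telescope (x y j : ℕ) (hj : 1 ≤ j) (hx : j * y ≤ x) :
    ∏ ℓ ∈ Icc 1 j, Nat.choose (x - (ℓ - 1) * y) y =
    Nat.choose x (j * y) * ∏ ℓ ∈ Icc 1 j, Nat.choose ((j - ℓ + 1) * y) y :=
  prod_choose_telescope_general x y j
end

section
/- For every n ≥ 1, the sum over integer partitions i of n of n!/∏_{j=1}^{d(i)} (m(i,j)!)^j equals the sum over integer partitions i of n of the double product over j from 1 to d(i) and ℓ from 1 to j of C(n − Σ_{k=1}^{j−1} k·m(i,k) − (ℓ−1)·m(i,j), m(i,j)). -/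
/-- `m(i,j)`: the multiplicity of the part of size `j` in the partition `i`. -/
def Nat.Partition.mult {n : ℕ} (i : n.Partition) (j : ℕ) : ℕ :=
  Multiset.count j i.parts

/-- `d(i)`: the largest part of the partition `i`. -/
def Nat.Partition.dmax {n : ℕ} (i : n.Partition) : ℕ :=
  i.parts.toFinset.sup id

open Finset

lemma innerA (m : ℕ) : ∀ (j S : ℕ), j * m ≤ S →
    (∏ ℓ ∈ Icc 1 j, Nat.choose (S - (ℓ-1)*m) m) * (m.factorial ^ j) * (S - j*m).factorial
      = S.factorial := by
  intro j
  induction j with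
  | zero => intro S h; simp
  | succ j ih =>
    intro S h
    have hmul : (j+1) * m = j * m + m := by ring
    rw [hmul] at h
    have hjm : j * m ≤ S := by omega
    have hm : m ≤ S - j * m := by omega
    rw [Finset.prod_Icc_succ_top (by omega)]
    have key := Nat.choose_mul_factorial_mul_factorial hm
    have h1 : S - j * m - m = S - (j+1) * m := by rw [hmul]; omega
    have h2 : (j + 1) - 1 = j := by omega
    rw [h2]
    calc (∏ ℓ ∈ Icc 1 j, Nat.choose (S - (ℓ-1)*m) m) * Nat.choose (S - j*m) m
          * m.factorial ^ (j+1) * (S - (j+1)*m).factorial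
        = (∏ ℓ ∈ Icc 1 j, Nat.choose (S - (ℓ-1)*m) m) * m.factorial ^ j *
            (Nat.choose (S - j*m) m * m.factorial * (S - j*m - m).factorial) := by
          rw [h1]; ring
      _ = (∏ ℓ ∈ Icc 1 j, Nat.choose (S - (ℓ-1)*m) m) * m.factorial ^ j * (S - j*m).factorial := by
          rw [key]
      _ = S.factorial := ih S hjm

lemma outerB (m : ℕ → ℕ) (n : ℕ) : ∀ (d : ℕ), (∑ k ∈ Icc 1 d, k * m k) ≤ n →
    (∏ j ∈ Icc 1 d, ∏ ℓ ∈ Icc 1 j,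
        Nat.choose (n - (∑ k ∈ Icc 1 (j-1), k * m k) - (ℓ-1) * m j) (m j)) *
      (∏ j ∈ Icc 1 d, (m j).factorial ^ j) *
      (n - ∑ k ∈ Icc 1 d, k * m k).factorial = n.factorial := by
  intro d
  induction d with
  | zero => intro h; simp
  | succ d ih =>
    intro h
    have hsum : (∑ k ∈ Icc 1 (d+1), k * m k) = (∑ k ∈ Icc 1 d, k * m k) + (d+1) * m (d+1) := by
      rw [Finset.sum_Icc_succ_top (by omega)]
    rw [hsum] at h ⊢
    have hd : (∑ k ∈ Icc 1 d, k * m k) ≤ n := by omega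
    rw [Finset.prod_Icc_succ_top (a := 1) (f := fun j => (m j).factorial ^ j) (by omega),
        Finset.prod_Icc_succ_top (a := 1)
          (f := fun j => ∏ ℓ ∈ Icc 1 j,
            Nat.choose (n - (∑ k ∈ Icc 1 (j-1), k * m k) - (ℓ-1) * m j) (m j)) (by omega)]
    have h2 : (d + 1) - 1 = d := by omega
    rw [h2]
    set Sd := ∑ k ∈ Icc 1 d, k * m k with hSd
    have hA := innerA (m (d+1)) (d+1) (n - Sd) (by omega)
    have h3 : n - (Sd + (d+1) * m (d+1)) = (n - Sd) - (d+1) * m (d+1) := by omega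
    rw [h3]
    set P := ∏ j ∈ Icc 1 d, ∏ ℓ ∈ Icc 1 j,
        Nat.choose (n - (∑ k ∈ Icc 1 (j-1), k * m k) - (ℓ-1) * m j) (m j)
    set Q := ∏ ℓ ∈ Icc 1 (d+1), Nat.choose (n - Sd - (ℓ-1) * m (d+1)) (m (d+1))
    set F := ∏ j ∈ Icc 1 d, (m j).factorial ^ j
    have hre : P * Q * (F * (m (d+1)).factorial ^ (d+1)) *
        ((n - Sd) - (d+1) * m (d+1)).factorial
        = (Q * (m (d+1)).factorial ^ (d+1) * ((n - Sd) - (d+1) * m (d+1)).factorial) *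
          (P * F) := by ring
    rw [hre, hA, mul_comm]
    exact ih hd

lemma sum_mult {n : ℕ} (i : n.Partition) :
    (∑ k ∈ Icc 1 i.dmax, k * i.mult k) = n := by
  have h := i.parts_sum
  have h2 : i.parts.sum = ∑ k ∈ i.parts.toFinset, k * i.parts.count k := by
    rw [Finset.sum_multiset_count i.parts]
    simp [mul_comm, smul_eq_mul]
  have hsub : i.parts.toFinset ⊆ Icc 1 i.dmax := by
    intro x hx
    simp only [Finset.mem_Icc]
    exact ⟨i.parts_pos (Multiset.mem_toFinset.mp hx), Finset.le_sup (f := id) hx⟩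
  simp only [Nat.Partition.mult]
  calc ∑ k ∈ Icc 1 i.dmax, k * i.parts.count k
      = ∑ k ∈ i.parts.toFinset, k * i.parts.count k := by
        refine (Finset.sum_subset hsub ?_).symm
        intro x _ hx
        have : i.parts.count x = 0 := by
          rw [Multiset.count_eq_zero]
          exact fun hmem => hx (Multiset.mem_toFinset.mpr hmem)
        simp [this]
    _ = i.parts.sum := h2.symm
    _ = n := h

/-- the two formulas (1) and (2) for `|BP_n^0|` agree. -/
theorem BPn0_formula_1_eq_2 (n : ℕ) (hn : 1 ≤ n) :
    (∑ i : n.Partition,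
      n.factorial / ∏ j ∈ Icc 1 i.dmax, (i.mult j).factorial ^ j) =
    ∑ i : n.Partition, ∏ j ∈ Icc 1 i.dmax, ∏ ℓ ∈ Icc 1 j,
      Nat.choose
        (n - (∑ k ∈ Icc 1 (j - 1), k * i.mult k) - (ℓ - 1) * i.mult j)
        (i.mult j) := by
  apply Finset.sum_congr rfl
  intro i _
  have hs := sum_mult i
  have hB := outerB i.mult n i.dmax (by omega)
  rw [hs] at hB
  simp only [Nat.sub_self, Nat.factorial_zero, mul_one] at hB
  rw [← hB]
  exact Nat.mul_div_cancel _ (Finset.prod_pos fun j _ => pow_pos (Nat.factorial_pos _) j)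
end

section
/- For every n ≥ 1, the sum over integer partitions i of n of the double product ∏_{j=1}^{d(i)} ∏_{ℓ=1}^{j} C(n − Σ_{k=1}^{j−1} k·m(i,k) − (ℓ−1)·m(i,j), m(i,j)) equals the sum over integer partitions i of n of ∏_{j=1}^{d(i)} [ C(n − Σ_{k=1}^{j−1} k·m(i,k), j·m(i,j)) · ∏_{ℓ=1}^{j} C((j−ℓ+1)·m(i,j), m(i,j)) ]. -/
/-!
The two formulas agree factor by factor: for every `N`, `m` and `j`,
`∏_{ℓ=1}^{j} C(N - (ℓ-1)m, m) = C(N, jm) · ∏_{t=1}^{j} C(tm, m)`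
(choose the `jm` elements first, then split them into `j` blocks of size `m`).
This follows by induction on `j` from `C(N, jm) C(N - jm, m) = C(N, (j+1)m) C((j+1)m, m)`,
and needs no bound on `N`: for `N < jm` and `m > 0` both sides vanish. The product over `t` is the
product over `j - ℓ + 1` read backwards.
-/

open Finset

theorem Finset.prod_Icc_one_reflect {M : Type*} [CommMonoid M] (f : ℕ → M) (j : ℕ) :
    ∏ ℓ ∈ Icc 1 j, f (j - ℓ + 1) = ∏ t ∈ Icc 1 j, f t := by
  apply prod_nbij' (fun ℓ => j - ℓ + 1) (fun t => j - t + 1) <;>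
    intro a ha <;> simp only [mem_Icc] at * <;> omega

theorem Nat.choose_mul_choose_sub_mul (N m j : ℕ) :
    N.choose (j * m) * (N - j * m).choose m =
      N.choose ((j + 1) * m) * ((j + 1) * m).choose m := by
  have hsucc : (j + 1) * m = j * m + m := Nat.succ_mul j m
  rw [hsucc, ← choose_symm_add, choose_mul (Nat.le_add_right _ _), Nat.add_sub_cancel_left]

theorem Nat.prod_choose_sub_mul (N m j : ℕ) :
    ∏ ℓ ∈ Icc 1 j, (N - (ℓ - 1) * m).choose m =
      N.choose (j * m) * ∏ t ∈ Icc 1 j, (t * m).choose m := by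
  induction j with
  | zero => simp
  | succ j ih =>
    rw [prod_Icc_succ_top (by omega), prod_Icc_succ_top (by omega), ih, Nat.add_sub_cancel,
      mul_right_comm, choose_mul_choose_sub_mul, mul_assoc, mul_comm (choose _ m)]

open Finset in
theorem BPn0_formula_2_eq_3_general (n : ℕ) :
    (∑ i : n.Partition, ∏ j ∈ Icc 1 i.dmax, ∏ ℓ ∈ Icc 1 j,
      Nat.choose
        (n - (∑ k ∈ Icc 1 (j - 1), k * i.mult k) - (ℓ - 1) * i.mult j)
        (i.mult j)) =
    ∑ i : n.Partition, ∏ j ∈ Icc 1 i.dmax,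
      Nat.choose (n - ∑ k ∈ Icc 1 (j - 1), k * i.mult k) (j * i.mult j) *
        ∏ ℓ ∈ Icc 1 j, Nat.choose ((j - ℓ + 1) * i.mult j) (i.mult j) := by
  refine sum_congr rfl fun i _ => prod_congr rfl fun j _ => ?_
  rw [Nat.prod_choose_sub_mul, prod_Icc_one_reflect (fun t => (t * i.mult j).choose (i.mult j))]

open Finset in
/-- the two formulas (2) and (3) for `|BP_n^0|` agree. -/
theorem BPn0_formula_2_eq_3 (n : ℕ) (hn : 1 ≤ n) :
    (∑ i : n.Partition, ∏ j ∈ Icc 1 i.dmax, ∏ ℓ ∈ Icc 1 j,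
      Nat.choose
        (n - (∑ k ∈ Icc 1 (j - 1), k * i.mult k) - (ℓ - 1) * i.mult j)
        (i.mult j)) =
    ∑ i : n.Partition, ∏ j ∈ Icc 1 i.dmax,
      Nat.choose (n - ∑ k ∈ Icc 1 (j - 1), k * i.mult k) (j * i.mult j) *
        ∏ ℓ ∈ Icc 1 j, Nat.choose ((j - ℓ + 1) * i.mult j) (i.mult j) :=
  BPn0_formula_2_eq_3_general n
end

section
/- The formal power series product ∏_{j≥1} Σ_{k≥0} (x^k/k!)^j, when expanded, has coefficient of x^n equal to (1/n!) · Σ over integer partitions i of n of n!/∏_{j=1}^{d(i)} (m(i,j)!)^j; i.e., it is the exponential generating function of the sequence a_n = Σ_{i=1}^{p(n)} n!/∏_j (m(i,j)!)^j. -/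
/-- The factor `Σ_{k≥0} (x^k/k!)^j = Σ_{k≥0} x^{jk}/(k!)^j` of the generating
function, as a formal power series over `ℚ`. -/
noncomputable def egfFactor (j : ℕ) : PowerSeries ℚ :=
  PowerSeries.mk fun m =>
    if j ∣ m then ((1 : ℚ) / (m / j).factorial) ^ j else 0

open Finset PowerSeries
open scoped PowerSeries.WithPiTopology

namespace PowerSeries

variable {R ι : Type*} [CommRing R]

theorem X_pow_dvd_prod_sub_one {n : ℕ} {s : Finset ι} {g : ι → R⟦X⟧}
    (h : ∀ i ∈ s, X ^ n ∣ g i - 1) : X ^ n ∣ (∏ i ∈ s, g i) - 1 := by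
  refine Finset.prod_induction g (fun a => X ^ n ∣ a - 1) (fun a b ha hb => ?_) (by simp) h
  rw [show a * b - 1 = (a - 1) * b + (b - 1) by ring]
  exact dvd_add (dvd_mul_of_dvd_left ha b) hb

theorem coeff_prod_eq_of_subset [DecidableEq ι] {n : ℕ} {s t : Finset ι} {g : ι → R⟦X⟧}
    (hst : s ⊆ t) (h : ∀ i ∈ t \ s, X ^ (n + 1) ∣ g i - 1) :
    coeff n (∏ i ∈ t, g i) = coeff n (∏ i ∈ s, g i) := by
  obtain ⟨q, hq⟩ := X_pow_dvd_prod_sub_one h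
  have hsplit : ∏ i ∈ t, g i = ∏ i ∈ s, g i + X ^ (n + 1) * (q * ∏ i ∈ s, g i) := by
    rw [← prod_sdiff hst, eq_add_of_sub_eq' hq]
    ring
  rw [hsplit, map_add, coeff_X_pow_mul', if_neg (by omega), add_zero]

end PowerSeries

theorem X_pow_dvd_egfFactor_sub_one (j : ℕ) : X ^ j ∣ egfFactor j - 1 := by
  refine X_pow_dvd_iff.2 fun m hm => ?_
  rcases Nat.eq_zero_or_pos m with rfl | hm0
  · simp [egfFactor]
  · have hndvd : ¬ j ∣ m := fun hd => hm0.ne' (Nat.eq_zero_of_dvd_of_lt hd hm)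
    simp [egfFactor, hndvd, hm0.ne']

def egfWeight (j k : ℕ) : ℚ := ((k.factorial : ℚ)⁻¹) ^ j

theorem egfFactor_eq_one_add_tsum {j : ℕ} (hj : j ≠ 0) :
    egfFactor j = 1 + ∑' k, egfWeight j (k + 1) • X ^ (j * (k + 1)) := by
  ext m
  rw [map_add, (Nat.Partition.summable_genFun_term' egfWeight hj).map_tsum _
    (WithPiTopology.continuous_coeff ℚ m)]
  simp only [egfFactor, coeff_mk, coeff_one, map_smul, coeff_X_pow, smul_eq_mul, mul_ite, mul_one,
    mul_zero, one_div, inv_pow, egfWeight]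
  rcases eq_or_ne m 0 with rfl | hm0
  · simp [hj]
  by_cases hdvd : j ∣ m
  · obtain ⟨q, rfl⟩ := hdvd
    obtain ⟨k, rfl⟩ := Nat.exists_eq_succ_of_ne_zero (right_ne_zero_of_mul hm0)
    rw [tsum_eq_single k fun b hb => by simp [hj, Ne.symm hb]]
    simp [hj]
  · have hne : ∀ k, m ≠ j * (k + 1) := fun k h => hdvd ⟨k + 1, h⟩
    simp [hdvd, hm0, hne]

theorem hasProd_egfFactor :
    HasProd (fun i => egfFactor (i + 1)) (Nat.Partition.genFun egfWeight) := by
  simpa only [egfFactor_eq_one_add_tsum (Nat.succ_ne_zero _)] using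
    Nat.Partition.hasProd_genFun egfWeight

theorem coeff_prod_Icc_egfFactor {n N : ℕ} (hN : n ≤ N) :
    coeff n (∏ j ∈ Icc 1 N, egfFactor j) = coeff n (Nat.Partition.genFun egfWeight) := by
  have hlim := ((WithPiTopology.continuous_coeff ℚ n).tendsto _).comp hasProd_egfFactor
  refine tendsto_nhds_unique (tendsto_const_nhds.congr' ?_) hlim
  refine Filter.eventually_atTop.2 ⟨range N, fun s hs => ?_⟩
  have hshift : ∏ j ∈ Icc 1 N, egfFactor j = ∏ i ∈ range N, egfFactor (i + 1) := by
    rw [range_eq_Ico, prod_Ico_add', zero_add, Ico_add_one_right_eq_Icc]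
  show coeff n (∏ j ∈ Icc 1 N, egfFactor j) = coeff n (∏ i ∈ s, egfFactor (i + 1))
  rw [hshift, coeff_prod_eq_of_subset hs fun i hi => ?_]
  have hNi : N ≤ i := by simpa using (mem_sdiff.1 hi).2
  exact (pow_dvd_pow X (by omega)).trans (X_pow_dvd_egfFactor_sub_one (i + 1))

namespace Nat.Partition

variable {n : ℕ}

theorem le_dmax (p : n.Partition) {j : ℕ} (hj : j ∈ p.parts) : j ≤ p.dmax :=
  Finset.le_sup (f := id) (Multiset.mem_toFinset.2 hj)

theorem toFinsupp_prod_eq_prod_Icc_dmax {M : Type*} [CommMonoid M] (p : n.Partition)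
    {f : ℕ → ℕ → M} (hf : ∀ j, f j 0 = 1) :
    p.parts.toFinsupp.prod f = ∏ j ∈ Icc 1 p.dmax, f j (p.mult j) := by
  rw [Finsupp.prod, Multiset.toFinsupp_support]
  refine prod_subset (fun j hj => ?_) (fun j _ hj => ?_)
  · have hj := Multiset.mem_toFinset.1 hj
    exact mem_Icc.2 ⟨p.parts_pos hj, p.le_dmax hj⟩
  · rw [Multiset.toFinsupp_apply, Multiset.count_eq_zero.2 (by simpa using hj), hf]

end Nat.Partition

/-- the coefficient of `x^n` in `∏_{j≥1} Σ_{k≥0} (x^k/k!)^j` is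
`(1/n!)·Σ_i n!/∏_j (m(i,j)!)^j`: since the factor for `j` is `1 + O(x^j)`, the
coefficient of `x^n` in the infinite product is that of any finite product
`∏_{j=1}^{N}` with `N ≥ n`. -/
theorem egf_coeff_BPn0 (n N : ℕ) (hN : n ≤ N) :
    PowerSeries.coeff (R := ℚ) n (∏ j ∈ Icc 1 N, egfFactor j) =
    ((n.factorial : ℚ))⁻¹ *
      ∑ i : n.Partition,
        (n.factorial : ℚ) /
          ∏ j ∈ Icc 1 i.dmax, ((i.mult j).factorial : ℚ) ^ j := by
  rw [coeff_prod_Icc_egfFactor hN, Nat.Partition.coeff_genFun, mul_sum]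
  refine sum_congr rfl fun p _ => ?_
  have hfact : (n.factorial : ℚ) ≠ 0 := Nat.cast_ne_zero.2 n.factorial_ne_zero
  rw [p.toFinsupp_prod_eq_prod_Icc_dmax fun j => by simp [egfWeight], div_eq_mul_inv,
    inv_mul_cancel_left₀ hfact, ← prod_inv_distrib]
  simp only [egfWeight, inv_pow]
end

section
/- For two partitioned orders μ, μ' of [n], φ(μ) = φ(μ') holds if and only if for every automata network f : X → X (with X a product of finite alphabets indexed by [n]) the induced dynamics f|μ and f|μ' are equal as functions X → X. -/
section AutomataNetwork

variable {n : ℕ} {X : Fin n → Type}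

/-- Update of the automata of the block `W`:
`f|W(x)_i = f_i(x)` if `i ∈ W` and `x_i` otherwise. -/
def updBlock (f : (∀ i, X i) → ∀ i, X i) (W : Finset (Fin n))
    (x : ∀ i, X i) : ∀ i, X i :=
  fun i => if i ∈ W then f x i else x i

/-- Update along a sequence of blocks:
`f|(W_0,…,W_{p-1}) = f|W_{p-1} ∘ ⋯ ∘ f|W_0`. -/
def updSeq (f : (∀ i, X i) → ∀ i, X i) (L : List (Finset (Fin n))) :
    (∀ i, X i) → ∀ i, X i :=
  L.foldl (fun g W => updBlock f W ∘ g) id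

end AutomataNetwork

/-! If every block of `L` is nonempty, `L` can be recovered from a single run of a network that
timestamps updates. Node `k` stores the set of times at which it has been updated; an update adds
the current time, read off as the number of distinct times recorded by all nodes, which equals
the number of blocks applied so far precisely because no block is empty. Started from the empty
configuration, `L` leaves at node `k` the set `{t | k ∈ L[t]}`, and `L[t] = {k | t ∈ x k}`.
Every block of `φ(μ)` is nonempty, so equal dynamics force equal sequential rewritings. -/

section AutomataNetwork

variable {n : ℕ} {X : Fin n → Type}

theorem updSeq_append_singleton (f : (∀ i, X i) → ∀ i, X i)
    (L : List (Finset (Fin n))) (W : Finset (Fin n)) :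
    updSeq f (L ++ [W]) = updBlock f W ∘ updSeq f L := by
  simp [updSeq, List.foldl_append]

end AutomataNetwork

namespace Timestamp

open Finset

variable {n N : ℕ}

def updateTimes (N : ℕ) (L : List (Finset (Fin n))) (k : Fin n) : Finset (Fin N) :=
  univ.filter fun t => k ∈ L.getD t ∅

theorem mem_updateTimes {L : List (Finset (Fin n))} {k : Fin n} {t : Fin N} :
    t ∈ updateTimes N L k ↔ k ∈ L.getD t ∅ := by
  simp only [updateTimes, mem_filter, mem_univ, true_and]

def network (N : ℕ) (x : Fin n → Finset (Fin N)) (k : Fin n) : Finset (Fin N) :=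
  x k ∪ univ.filter fun t => (t : ℕ) = #(univ.biUnion x)

theorem biUnion_updateTimes {L : List (Finset (Fin n))} (hL : ∀ W ∈ L, W.Nonempty) :
    univ.biUnion (updateTimes N L) = univ.filter fun t : Fin N => (t : ℕ) < L.length := by
  ext t
  simp only [mem_biUnion, mem_univ, true_and, mem_updateTimes, mem_filter]
  constructor
  · rintro ⟨k, hk⟩
    by_contra ht
    rw [List.getD_eq_default _ _ (not_lt.mp ht)] at hk
    exact absurd hk (notMem_empty k)
  · intro ht
    rw [List.getD_eq_getElem _ _ ht]
    exact hL _ (List.getElem_mem ht)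

theorem card_biUnion_updateTimes {L : List (Finset (Fin n))} (hL : ∀ W ∈ L, W.Nonempty)
    (hN : L.length ≤ N) : #(univ.biUnion (updateTimes N L)) = L.length := by
  rw [biUnion_updateTimes hL, Fin.card_filter_val_lt, min_eq_right hN]

theorem updateTimes_append_singleton (L : List (Finset (Fin n))) (W : Finset (Fin n))
    (k : Fin n) : updateTimes N (L ++ [W]) k =
      if k ∈ W then updateTimes N L k ∪ univ.filter fun t => (t : ℕ) = L.length
      else updateTimes N L k := by
  ext t
  rcases lt_trichotomy (t : ℕ) L.length with ht | ht | ht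
  · rw [mem_updateTimes, List.getD_append _ _ _ _ ht]
    split_ifs <;> simp [mem_updateTimes, ht.ne]
  · rw [mem_updateTimes, List.getD_append_right _ _ _ _ ht.ge]
    split_ifs <;> simp [mem_updateTimes, *]
  · have hW : [W].length ≤ (t : ℕ) - L.length := by simp only [List.length_singleton]; omega
    rw [mem_updateTimes, List.getD_append_right _ _ _ _ ht.le, List.getD_eq_default _ _ hW]
    have hL : L.getD t ∅ = ∅ := List.getD_eq_default _ _ ht.le
    split_ifs <;> simp only [mem_union, mem_filter, mem_univ, true_and, mem_updateTimes, hL,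
      ht.ne', notMem_empty, or_false]

theorem updSeq_network {L : List (Finset (Fin n))} (hL : ∀ W ∈ L, W.Nonempty)
    (hN : L.length ≤ N) : updSeq (network N) L (fun _ => ∅) = updateTimes N L := by
  induction L using List.reverseRecOn with
  | nil => ext k t; simp [updSeq, mem_updateTimes]
  | append_singleton L W ih =>
    have hL₀ : ∀ V ∈ L, V.Nonempty := fun V hV => hL V (by simp [hV])
    have hN₀ : L.length ≤ N := by simp at hN; omega
    funext k
    rw [updSeq_append_singleton, Function.comp_apply, ih hL₀ hN₀,
      updateTimes_append_singleton]
    simp only [updBlock, network, card_biUnion_updateTimes hL₀ hN₀]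

theorem length_le_of_updateTimes_eq {L L' : List (Finset (Fin n))}
    (hL' : ∀ W ∈ L', W.Nonempty) (hN : L'.length ≤ N)
    (h : updateTimes N L = updateTimes N L') : L'.length ≤ L.length := by
  by_contra! hlt
  obtain ⟨k, hk⟩ := hL' _ (List.getElem_mem hlt)
  have hmem : (⟨L.length, hlt.trans_le hN⟩ : Fin N) ∈ updateTimes N L' k := by
    rwa [mem_updateTimes, List.getD_eq_getElem _ _ hlt]
  rw [← h, mem_updateTimes, List.getD_eq_default _ _ le_rfl] at hmem
  exact notMem_empty k hmem

theorem eq_of_updateTimes_eq {L L' : List (Finset (Fin n))}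
    (hL : ∀ W ∈ L, W.Nonempty) (hL' : ∀ W ∈ L', W.Nonempty)
    (hN : L.length ≤ N) (hN' : L'.length ≤ N)
    (h : updateTimes N L = updateTimes N L') : L = L' := by
  have hlen : L.length = L'.length :=
    (length_le_of_updateTimes_eq hL hN h.symm).antisymm (length_le_of_updateTimes_eq hL' hN' h)
  refine List.ext_getElem hlen fun t ht ht' => Finset.ext fun k => ?_
  have := congrArg (fun x => (⟨t, ht.trans_le hN⟩ : Fin N) ∈ x k) h
  simp only [mem_updateTimes, List.getD_eq_getElem _ _ ht, List.getD_eq_getElem _ _ ht'] at this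
  exact Iff.of_eq this

end Timestamp

theorem PartitionedOrder.phiBlock_nonempty_s14 {n : ℕ} (hn : 0 < n) (μ : PartitionedOrder n)
    (ℓ : ℕ) : (μ.phiBlock ℓ).Nonempty := by
  obtain ⟨S, hS, -⟩ := μ.cover ⟨0, hn⟩
  exact Finset.Nonempty.image ⟨⟨S, hS⟩, Finset.mem_attach _ _⟩ _

theorem PartitionedOrder.nonempty_of_mem_phi {n : ℕ} (hn : 0 < n) (μ : PartitionedOrder n)
    {W : Finset (Fin n)} (hW : W ∈ μ.phi) : W.Nonempty := by
  obtain ⟨ℓ, -, rfl⟩ := List.mem_map.mp hW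
  exact μ.phiBlock_nonempty_s14 hn ℓ

/-- `φ(μ) = φ(μ')` iff for every automata network `f` on any
product of finite alphabets (each of cardinality at least 2) the induced
dynamics coincide. -/
theorem phi_eq_iff_dynamics_eq {n : ℕ} (hn : 2 ≤ n)
    (μ μ' : PartitionedOrder n) :
    μ.phi = μ'.phi ↔
    ∀ (X : Fin n → Type) [∀ i, Fintype (X i)],
      (∀ i, 2 ≤ Fintype.card (X i)) →
      ∀ f : (∀ i, X i) → ∀ i, X i,
        updSeq f μ.phi = updSeq f μ'.phi := by
  refine ⟨fun h X _ _ f => by rw [h], fun h => ?_⟩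
  set N := μ.phi.length + μ'.phi.length + 1
  have hcard : ∀ _ : Fin n, 2 ≤ Fintype.card (Finset (Fin N)) := fun _ => by
    simpa [Fintype.card_finset] using Nat.le_self_pow (by omega) 2
  have hne : ∀ ν : PartitionedOrder n, ∀ W ∈ ν.phi, W.Nonempty := fun ν _ hW =>
    ν.nonempty_of_mem_phi (by omega) hW
  have hN : μ.phi.length ≤ N := by omega
  have hN' : μ'.phi.length ≤ N := by omega
  apply Timestamp.eq_of_updateTimes_eq (hne μ) (hne μ') hN hN'
  rw [← Timestamp.updSeq_network (hne μ) hN, ← Timestamp.updSeq_network (hne μ') hN',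
    h _ hcard]
end

section
/- Let μ, μ' be partitioned orders of [n] with φ(μ) equal to the circular shift by î of φ(μ'), both of length p. Then for every automata network f : X → X, the map π = f|(W_0,...,W_{î−1}) (updating the first î blocks of φ(μ)) restricts to a bijection from the limit set Ω of f|φ(μ) onto the limit set Ω' of f|φ(μ'), and it conjugates the restricted dynamics: f|φ(μ') ∘ π = π ∘ f|φ(μ) on Ω. -/
section AutomataNetwork

variable {n : ℕ} {X : Fin n → Type}

lemma foldl_updBlock_comp (f : (∀ i, X i) → ∀ i, X i)
    (L : List (Finset (Fin n))) (g : (∀ i, X i) → ∀ i, X i) :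
    L.foldl (fun g W => updBlock f W ∘ g) g = updSeq f L ∘ g := by
  induction L generalizing g with
  | nil => rfl
  | cons W L ih =>
    simp only [List.foldl_cons, updSeq]
    rw [ih, ih, Function.comp_id, Function.comp_assoc]

lemma updSeq_append (f : (∀ i, X i) → ∀ i, X i)
    (L₁ L₂ : List (Finset (Fin n))) :
    updSeq f (L₁ ++ L₂) = updSeq f L₂ ∘ updSeq f L₁ := by
  rw [updSeq, List.foldl_append, foldl_updBlock_comp, ← updSeq]

end AutomataNetwork

/-- The limit set `Ω_g = ⋂_t g^t(X)` of a dynamical system `g`. -/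
def limitSet {α : Type*} (g : α → α) : Set α := ⋂ t : ℕ, Set.range (g^[t])

section LimitSet

open Function Set

variable {α β : Type*}

lemma antitone_range_iterate (g : α → α) : Antitone fun t => range g^[t] := by
  intro m n hmn
  show range g^[n] ⊆ range g^[m]
  rw [← Nat.add_sub_cancel' hmn, iterate_add]
  exact range_comp_subset_range _ _

lemma Function.Semiconj.mapsTo_limitSet {f : α → β} {ga : α → α} {gb : β → β}
    (h : Semiconj f ga gb) : MapsTo f (limitSet ga) (limitSet gb) := fun x hx =>
  mem_iInter.mpr fun t => by
    obtain ⟨z, rfl⟩ := mem_iInter.mp hx t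
    exact ⟨f z, ((h.iterate_right t).eq z).symm⟩

lemma exists_limitSet_eq_range_iterate [Finite α] (g : α → α) :
    ∃ N, ∀ m, N ≤ m → limitSet g = range g^[m] := by
  obtain ⟨N, hN⟩ := WellFoundedLT.antitone_chain_condition (antitone_range_iterate g)
  refine ⟨N, fun m hm =>
    Subset.antisymm (iInter_subset _ m) fun x hx => mem_iInter.mpr fun t => ?_⟩
  rcases le_total t m with htm | hmt
  · exact antitone_range_iterate g htm hx
  · rwa [← hN t (hm.trans hmt), hN m hm]

lemma bijOn_limitSet [Finite α] (g : α → α) : BijOn g (limitSet g) (limitSet g) := by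
  have hmaps : MapsTo g (limitSet g) (limitSet g) :=
    Semiconj.mapsTo_limitSet (Function.Commute.refl g)
  refine (toFinite _).surjOn_iff_bijOn_of_mapsTo hmaps |>.mp fun y hy => ?_
  obtain ⟨N, hN⟩ := exists_limitSet_eq_range_iterate g
  rw [hN (N + 1) N.le_succ, iterate_succ'] at hy
  obtain ⟨z, rfl⟩ := hy
  exact ⟨g^[N] z, by rw [hN N le_rfl]; exact mem_range_self z, rfl⟩

theorem bijOn_limitSet_comp [Finite α] (A : α → β) (B : β → α) :
    BijOn A (limitSet (B ∘ A)) (limitSet (A ∘ B)) := by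
  have hconj : Semiconj A (B ∘ A) (A ∘ B) := fun _ => rfl
  refine ⟨hconj.mapsTo_limitSet, fun x hx y hy hxy => ?_, fun y hy => ?_⟩
  · exact (bijOn_limitSet (B ∘ A)).injOn hx hy (congrArg B hxy)
  · obtain ⟨N, hN⟩ := exists_limitSet_eq_range_iterate (B ∘ A)
    obtain ⟨z, rfl⟩ := mem_iInter.mp hy (N + 1)
    refine ⟨(B ∘ A)^[N] (B z), by rw [hN N le_rfl]; exact mem_range_self _, ?_⟩
    rw [iterate_succ_apply]
    exact (hconj.iterate_right N).eq (B z)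

end LimitSet

/-- if `φ(μ')` is the circular shift of `φ(μ)` by `ksh`, then
`π = f|(W_0,…,W_{ksh−1})` restricts to a bijection between the limit sets and
conjugates the two dynamics on the limit set of `f|φ(μ)`. -/
theorem shift_conjugates_limit_dynamics {n : ℕ} {X : Fin n → Type}
    [∀ i, Fintype (X i)] (μ μ' : PartitionedOrder n) (ksh : ℕ)
    (hk : ksh < μ.phi.length) (hshift : μ'.phi = μ.phi.rotate ksh)
    (f : (∀ i, X i) → ∀ i, X i) :
    Set.BijOn (updSeq f (μ.phi.take ksh))
      (limitSet (updSeq f μ.phi)) (limitSet (updSeq f μ'.phi)) ∧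
    Set.EqOn (updSeq f μ'.phi ∘ updSeq f (μ.phi.take ksh))
      (updSeq f (μ.phi.take ksh) ∘ updSeq f μ.phi)
      (limitSet (updSeq f μ.phi)) := by
  have hsplit : updSeq f μ.phi = updSeq f (μ.phi.drop ksh) ∘ updSeq f (μ.phi.take ksh) := by
    rw [← updSeq_append, List.take_append_drop]
  have hrotate : updSeq f μ'.phi = updSeq f (μ.phi.take ksh) ∘ updSeq f (μ.phi.drop ksh) := by
    rw [hshift, List.rotate_eq_drop_append_take hk.le, updSeq_append]
  rw [hsplit, hrotate]
  exact ⟨bijOn_limitSet_comp _ _, fun _ _ => rfl⟩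
end
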